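/- arXiv:0907.2275 — 4 statements merged into one kernel-verified Lean document; each statement's English description precedes it below -/
import Mathlib

section
/- The binary quadratic form ⟨−4, −15/4⟩ over ℚ is NOT equivalent to the binary quadratic form ⟨−2, −30⟩. -/
open QuadraticMap

/-- Descent: `16a² + 15b² = 8c²` forces `c = 0` over `ℤ` (5-adic obstruction). -/
lemma descent16_15_8 : ∀ n : ℕ, ∀ a b c : ℤ, c.natAbs = n →
    16*a^2 + 15*b^2 = 8*c^2 → c = 0 := by
  intro n
  induction n using Nat.strong_induction_on with
  | _ n ih =>
    intro a b c hn h
    by_cases hc : c = 0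
    · exact hc
    have key : ∀ u v w : ZMod 5, 16*u^2 + 15*v^2 = 8*w^2 → u = 0 ∧ w = 0 := by decide
    have h5 : ((16*a^2 + 15*b^2 : ℤ) : ZMod 5) = ((8*c^2 : ℤ) : ZMod 5) := by
      exact_mod_cast congrArg _ h
    push_cast at h5
    obtain ⟨ha0, hc0⟩ := key _ _ _ h5
    have hda : (5:ℤ) ∣ a := by
      exact_mod_cast (ZMod.intCast_zmod_eq_zero_iff_dvd a 5).mp ha0
    have hdc : (5:ℤ) ∣ c := by
      exact_mod_cast (ZMod.intCast_zmod_eq_zero_iff_dvd c 5).mp hc0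
    obtain ⟨a', rfl⟩ := hda
    obtain ⟨c', rfl⟩ := hdc
    have keyb : ∀ v : ZMod 5, 3*v^2 = 0 → v = 0 := by decide
    have hb5 : ((3*b^2 : ℤ) : ZMod 5) = 0 :=
      (ZMod.intCast_zmod_eq_zero_iff_dvd _ 5).mpr
        ⟨8*c'^2 - 16*a'^2, by ring_nf; ring_nf at h; linarith⟩
    have hdb : (5:ℤ) ∣ b := by
      exact_mod_cast (ZMod.intCast_zmod_eq_zero_iff_dvd b 5).mp (keyb _ (by exact_mod_cast hb5))
    obtain ⟨b', rfl⟩ := hdb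
    have h' : 16*a'^2 + 15*b'^2 = 8*c'^2 := by ring_nf at h ⊢; linarith
    have hc' : c' ≠ 0 := by rintro rfl; simp at hc
    have hlt : c'.natAbs < n := by
      subst hn
      have : (5*c').natAbs = 5 * c'.natAbs := by
        rw [Int.natAbs_mul]; norm_num
      rw [this]
      have : 1 ≤ c'.natAbs := Int.natAbs_pos.mpr hc'
      omega
    have := ih _ hlt a' b' c' rfl h'
    exact absurd this hc'

lemma no_rat_sol (x y : ℚ) : 16*x^2 + 15*y^2 ≠ 8 := by
  intro h
  have hdx : ((x.den:ℚ)) ≠ 0 := by exact_mod_cast x.den_nz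
  have hdy : ((y.den:ℚ)) ≠ 0 := by exact_mod_cast y.den_nz
  have hx : (x.num : ℚ) = x * x.den := (div_eq_iff hdx).mp (Rat.num_div_den x)
  have hy : (y.num : ℚ) = y * y.den := (div_eq_iff hdy).mp (Rat.num_div_den y)
  have hQ : 16*((x.num:ℚ)*(y.den:ℚ))^2 + 15*((y.num:ℚ)*(x.den:ℚ))^2
      = 8*((x.den:ℚ)*(y.den:ℚ))^2 := by
    rw [hx, hy]; linear_combination ((x.den:ℚ)*(y.den:ℚ))^2 * h
  have hZ : 16*(x.num*(y.den:ℤ))^2 + 15*(y.num*(x.den:ℤ))^2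
      = 8*((x.den:ℤ)*(y.den:ℤ))^2 := by exact_mod_cast hQ
  have := descent16_15_8 _ _ _ _ rfl hZ
  have hx0 : (x.den:ℤ) ≠ 0 := by exact_mod_cast x.den_nz
  have hy0 : (y.den:ℤ) ≠ 0 := by exact_mod_cast y.den_nz
  exact mul_ne_zero hx0 hy0 this

/-- The form `⟨-4, -15/4⟩` (the rational Witt class of `7₄`) is not equivalent to
`⟨-2, -30⟩`; hence `u(7₄) ≥ 2`. -/
theorem seven_four_not_unknotting_number_one :
    ¬ QuadraticMap.Equivalent
      (weightedSumSquares ℚ ![(-4 : ℚ), -15/4])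
      (weightedSumSquares ℚ ![(-2 : ℚ), -30]) := by
  rintro ⟨f⟩
  set v := f.symm ![1, 0] with hv
  have h1 : weightedSumSquares ℚ ![(-4 : ℚ), -15/4] v
      = weightedSumSquares ℚ ![(-2 : ℚ), -30] ![1, 0] := by
    rw [← f.map_app v]
    congr 1
    exact f.apply_symm_apply _
  rw [weightedSumSquares_apply, weightedSumSquares_apply] at h1
  simp [Fin.sum_univ_two, smul_eq_mul] at h1
  have : 16*(v 0)^2 + 15*(v 1)^2 = 8 := by
    norm_num at h1
    linear_combination (-4 : ℚ) * h1
  exact no_rat_sol _ _ this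
end

section
/- Let N be a nonzero rational number and let q be an odd prime such that the q-adic valuation of N is odd and −2 is not a square modulo q. Then the quadratic form ⟨−1, −2, N⟩ over ℚ is not equivalent to ⟨−2N⟩ ⊕ H. -/
/-!
The right-hand form contains a hyperbolic plane, so it is isotropic; hence so is
`⟨-1, -2, N⟩`, and since `⟨1, 2⟩` is anisotropic this means `N = A² + 2B²` over `ℚ`.
Clearing denominators, the `q`-adic valuation of a nonzero integer `x² + 2y²` is even:
as `-2` is not a square mod `q`, `q ∣ x² + 2y²` forces `q ∣ x` and `q ∣ y`, and one
descends to `(x/q)² + 2(y/q)²`, losing `q²`. This contradicts `v_q(N)` odd.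
-/

open QuadraticMap

theorem QuadraticMap.Equivalent.anisotropic_iff {R M₁ M₂ P : Type*} [CommSemiring R]
    [AddCommMonoid M₁] [AddCommMonoid M₂] [AddCommMonoid P] [Module R M₁] [Module R M₂]
    [Module R P] {Q₁ : QuadraticMap R M₁ P} {Q₂ : QuadraticMap R M₂ P}
    (h : Q₁.Equivalent Q₂) : Q₁.Anisotropic ↔ Q₂.Anisotropic := by
  obtain ⟨e⟩ := h
  refine ⟨fun h₁ x hx => ?_, fun h₂ x hx => ?_⟩
  · exact (map_eq_zero_iff e.symm e.symm.injective).mp (h₁ _ ((e.symm.map_app x).trans hx))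
  · exact (map_eq_zero_iff e e.injective).mp (h₂ _ ((e.map_app x).trans hx))

theorem not_anisotropic_weightedSumSquares_one_neg_one {R : Type*} [CommRing R] [Nontrivial R]
    (c : R) : ¬(weightedSumSquares R ![c, 1, -1]).Anisotropic := by
  rw [not_anisotropic_iff_exists]
  refine ⟨![0, 1, 1], fun h => one_ne_zero (congrFun h 1), ?_⟩
  simp [weightedSumSquares_apply, Fin.sum_univ_three]

theorem eq_zero_and_eq_zero_of_sq_add_mul_sq_eq_zero {K : Type*} [Field K] {a x y : K}
    (ha : ¬IsSquare (-a)) (h : x ^ 2 + a * y ^ 2 = 0) : x = 0 ∧ y = 0 := by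
  have hy : y = 0 := by
    by_contra hy
    exact ha ⟨x / y, by field_simp; linear_combination -h⟩
  subst hy
  simpa using h

theorem exists_eq_sq_add_mul_sq_of_not_anisotropic {K : Type*} [Field K] {a N : K}
    (ha : ¬IsSquare (-a)) (h : ¬(weightedSumSquares K ![-1, -a, N]).Anisotropic) :
    ∃ A B, N = A ^ 2 + a * B ^ 2 := by
  obtain ⟨v, hv0, hv⟩ := (not_anisotropic_iff_exists _).mp h
  simp only [weightedSumSquares_apply, smul_eq_mul, Fin.sum_univ_three, Matrix.cons_val_zero,
    Matrix.cons_val_one, Matrix.cons_val, neg_mul, one_mul] at hv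
  have hc : v 2 ≠ 0 := by
    intro hc
    obtain ⟨h0, h1⟩ := eq_zero_and_eq_zero_of_sq_add_mul_sq_eq_zero ha (x := v 0) (y := v 1)
      (by rw [hc] at hv; linear_combination -hv)
    exact hv0 (by ext i; fin_cases i <;> assumption)
  exact ⟨v 0 / v 2, v 1 / v 2, by field_simp; linear_combination hv⟩

section padicVal

variable {q : ℕ} [Fact q.Prime] {a : ℤ}

theorem Int.dvd_and_dvd_of_dvd_sq_add_mul_sq (ha : ¬IsSquare (-(a : ZMod q))) {x y : ℤ}
    (h : (q : ℤ) ∣ x ^ 2 + a * y ^ 2) : (q : ℤ) ∣ x ∧ (q : ℤ) ∣ y := by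
  simp only [← ZMod.intCast_zmod_eq_zero_iff_dvd] at h ⊢
  push_cast at h
  exact eq_zero_and_eq_zero_of_sq_add_mul_sq_eq_zero ha h

theorem even_padicValInt_sq_add_mul_sq (ha : ¬IsSquare (-(a : ZMod q))) (x y : ℤ)
    (h : x ^ 2 + a * y ^ 2 ≠ 0) : Even (padicValInt q (x ^ 2 + a * y ^ 2)) := by
  by_cases hdvd : (q : ℤ) ∣ x ^ 2 + a * y ^ 2
  · obtain ⟨⟨x', rfl⟩, ⟨y', rfl⟩⟩ := Int.dvd_and_dvd_of_dvd_sq_add_mul_sq ha hdvd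
    have hscale : (q * x') ^ 2 + a * (q * y') ^ 2 = (x' ^ 2 + a * y' ^ 2) * q * q := by ring
    have h' : x' ^ 2 + a * y' ^ 2 ≠ 0 := by
      intro h0
      exact h (by rw [hscale, h0]; ring)
    have hq : (q : ℤ) ≠ 0 := by exact_mod_cast (Fact.out : q.Prime).ne_zero
    rw [hscale, padicValInt_mul_eq_succ _ (mul_ne_zero h' hq), padicValInt_mul_eq_succ _ h',
      add_assoc]
    exact (even_padicValInt_sq_add_mul_sq ha x' y' h').add even_two
  · rw [padicValInt.eq_zero_of_not_dvd hdvd]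
    exact ⟨0, rfl⟩
termination_by (x ^ 2 + a * y ^ 2).natAbs
decreasing_by
  subst_vars
  have hp : q.Prime := Fact.out
  rw [hscale, Int.natAbs_mul, Int.natAbs_mul, Int.natAbs_natCast, mul_assoc]
  exact lt_mul_of_one_lt_right (Int.natAbs_pos.mpr h')
    (Nat.one_lt_mul_iff.mpr ⟨hp.pos, hp.pos, Or.inl hp.one_lt⟩)

theorem even_padicValRat_of_eq_sq_add_mul_sq (ha : ¬IsSquare (-(a : ZMod q))) {N A B : ℚ}
    (hN : N ≠ 0) (hNAB : N = A ^ 2 + a * B ^ 2) : Even (padicValRat q N) := by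
  have hd : ((A.den * B.den : ℕ) : ℚ) ^ 2 ≠ 0 := by positivity
  have hscale : (((A.num * B.den) ^ 2 + a * (B.num * A.den) ^ 2 : ℤ) : ℚ)
      = N * ((A.den * B.den : ℕ) : ℚ) ^ 2 := by
    push_cast
    rw [← A.mul_den_eq_num, ← B.mul_den_eq_num, hNAB]
    ring
  have hint : (A.num * B.den) ^ 2 + a * (B.num * A.den) ^ 2 ≠ 0 := by
    have := mul_ne_zero hN hd
    rw [← hscale] at this
    exact_mod_cast this
  have hval := congrArg (padicValRat q) hscale
  rw [padicValRat.of_int, padicValRat.mul hN hd, padicValRat.pow, padicValRat.of_nat] at hval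
  rw [show padicValRat q N = _ - 2 * _ from eq_sub_of_add_eq hval.symm]
  exact ((Int.even_coe_nat _).mpr (even_padicValInt_sq_add_mul_sq ha _ _ hint)).sub
    (even_two_mul _)

end padicVal

theorem pretzel_witt_obstruction_general (q : ℕ) (hq : q.Prime) (N : ℚ)
    (hval : Odd (padicValRat q N)) (hsq : ¬ IsSquare (-2 : ZMod q)) :
    ¬ QuadraticMap.Equivalent
      (weightedSumSquares ℚ ![(-1 : ℚ), -2, N])
      (weightedSumSquares ℚ ![-2 * N, 1, -1]) := by
  have : Fact q.Prime := ⟨hq⟩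
  intro hequiv
  have hN : N ≠ 0 := by
    rintro rfl
    simp at hval
  obtain ⟨A, B, hAB⟩ := exists_eq_sq_add_mul_sq_of_not_anisotropic (a := (2 : ℚ))
    (not_isSquare_of_neg (by norm_num))
    (by rw [hequiv.anisotropic_iff]; exact not_anisotropic_weightedSumSquares_one_neg_one _)
  have hsq' : ¬IsSquare (-((2 : ℤ) : ZMod q)) := by exact_mod_cast hsq
  exact Int.not_even_iff_odd.mpr hval
    (even_padicValRat_of_eq_sq_add_mul_sq hsq' hN (by exact_mod_cast hAB))

/-- If `N ≠ 0` has odd `q`-adic valuation at an odd prime `q` modulo which `-2` is not a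
square, then `⟨-1, -2, N⟩` is not equivalent to `⟨-2N⟩ ⊕ H`. -/
theorem pretzel_witt_obstruction (q : ℕ) (hq : q.Prime) (hq2 : Odd q) (N : ℚ)
    (hN : N ≠ 0) (hval : Odd (padicValRat q N)) (hsq : ¬ IsSquare (-2 : ZMod q)) :
    ¬ QuadraticMap.Equivalent
      (weightedSumSquares ℚ ![(-1 : ℚ), -2, N])
      (weightedSumSquares ℚ ![-2 * N, 1, -1]) :=
  pretzel_witt_obstruction_general q hq N hval hsq
end

section
/- Let k and ℓ be positive integers and set p₃ = 2k·7^{ℓ+1}. Then the quadratic form ⟨−1, −2, 4p₃ − 21⟩ over ℚ is not equivalent to ⟨−2(4p₃ − 21)⟩ ⊕ H. -/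
open QuadraticMap

private lemma zmod7_aux : ∀ x y : ZMod 7, x^2 + 2*y^2 = 0 → x = 0 ∧ y = 0 := by decide

private lemma int_aniso (M : ℤ) (hM : ¬ (7:ℤ) ∣ M) :
    ∀ n : ℕ, ∀ a b c : ℤ, a.natAbs + b.natAbs + c.natAbs ≤ n →
      a^2 + 2*b^2 = 7*M*c^2 → a = 0 ∧ b = 0 ∧ c = 0 := by
  intro n
  induction n using Nat.strong_induction_on with
  | _ n ih =>
    intro a b c hsum heq
    by_cases h0 : a.natAbs + b.natAbs + c.natAbs = 0
    · omega
    -- mod 7: a ≡ 0, b ≡ 0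
    haveI : Fact (Nat.Prime 7) := ⟨by norm_num⟩
    have h7 : ((a : ZMod 7))^2 + 2*((b : ZMod 7))^2 = 0 := by
      have h := congrArg (fun z : ℤ => (z : ZMod 7)) heq
      push_cast at h
      have h70 : (7 : ZMod 7) = 0 := by rfl
      rw [h, h70]
      ring
    obtain ⟨ha0, hb0⟩ := zmod7_aux _ _ h7
    obtain ⟨a₁, rfl⟩ : (7:ℤ) ∣ a := by
      exact_mod_cast (ZMod.intCast_zmod_eq_zero_iff_dvd a 7).mp ha0
    obtain ⟨b₁, rfl⟩ : (7:ℤ) ∣ b := by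
      exact_mod_cast (ZMod.intCast_zmod_eq_zero_iff_dvd b 7).mp hb0
    have heq2 : 7*(a₁^2 + 2*b₁^2) = M * c^2 := by nlinarith [heq]
    -- mod 7: c ≡ 0
    have hc0 : ((c : ZMod 7)) = 0 := by
      have h7' : (M : ZMod 7) * ((c : ZMod 7))^2 = 0 := by
        have h := congrArg (fun z : ℤ => (z : ZMod 7)) heq2
        push_cast at h
        have h70 : (7 : ZMod 7) = 0 := by rfl
        rw [← h, h70]
        ring
      have hMne : (M : ZMod 7) ≠ 0 := by
        intro h
        exact hM (by exact_mod_cast (ZMod.intCast_zmod_eq_zero_iff_dvd M 7).mp h)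
      rcases mul_eq_zero.mp h7' with h | h
      · exact absurd h hMne
      · exact pow_eq_zero_iff (n := 2) (by norm_num) |>.mp h
    obtain ⟨c₁, rfl⟩ : (7:ℤ) ∣ c := by
      exact_mod_cast (ZMod.intCast_zmod_eq_zero_iff_dvd c 7).mp hc0
    have heq3 : a₁^2 + 2*b₁^2 = 7*M*c₁^2 := by nlinarith [heq2]
    have hmeas : a₁.natAbs + b₁.natAbs + c₁.natAbs < n := by
      have h1 : (7*a₁).natAbs = 7 * a₁.natAbs := by simp [Int.natAbs_mul]
      have h2 : (7*b₁).natAbs = 7 * b₁.natAbs := by simp [Int.natAbs_mul]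
      have h3 : (7*c₁).natAbs = 7 * c₁.natAbs := by simp [Int.natAbs_mul]
      omega
    obtain ⟨ha, hb, hc⟩ := ih _ hmeas a₁ b₁ c₁ le_rfl heq3
    exact ⟨by omega, by omega, by omega⟩

private lemma rat_aniso (M : ℤ) (hM : ¬ (7:ℤ) ∣ M) (x y z : ℚ)
    (h : x^2 + 2*y^2 = 7*(M:ℚ)*z^2) : x = 0 ∧ y = 0 ∧ z = 0 := by
  set a : ℤ := x.num * y.den * z.den with ha
  set b : ℤ := (x.den : ℤ) * y.num * z.den with hb
  set c : ℤ := (x.den : ℤ) * y.den * z.num with hc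
  have hxd : ((x.den : ℚ)) ≠ 0 := by exact_mod_cast x.den_ne_zero
  have hyd : ((y.den : ℚ)) ≠ 0 := by exact_mod_cast y.den_ne_zero
  have hzd : ((z.den : ℚ)) ≠ 0 := by exact_mod_cast z.den_ne_zero
  have hx : (x.num : ℚ) = x * x.den := (Rat.mul_den_eq_num x).symm
  have hy : (y.num : ℚ) = y * y.den := (Rat.mul_den_eq_num y).symm
  have hz : (z.num : ℚ) = z * z.den := (Rat.mul_den_eq_num z).symm
  have key : (a:ℚ)^2 + 2*(b:ℚ)^2 = 7*(M:ℚ)*(c:ℚ)^2 := by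
    push_cast [ha, hb, hc]
    rw [hx, hy, hz]
    ring_nf
    nlinarith [h, sq_nonneg ((x.den : ℚ) * y.den * z.den)]
  have key' : a^2 + 2*b^2 = 7*M*c^2 := by exact_mod_cast key
  obtain ⟨ha0, hb0, hc0⟩ := int_aniso M hM (a.natAbs + b.natAbs + c.natAbs) a b c le_rfl key'
  refine ⟨?_, ?_, ?_⟩
  · have : x.num = 0 := by
      have := ha0; rw [ha] at this
      rcases mul_eq_zero.mp this with h' | h'
      · rcases mul_eq_zero.mp h' with h'' | h''
        · exact h''
        · exact absurd h'' (by exact_mod_cast y.den_ne_zero)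
      · exact absurd h' (by exact_mod_cast z.den_ne_zero)
    exact Rat.num_eq_zero.mp this
  · have : y.num = 0 := by
      have := hb0; rw [hb] at this
      rcases mul_eq_zero.mp this with h' | h'
      · rcases mul_eq_zero.mp h' with h'' | h''
        · exact absurd h'' (by exact_mod_cast x.den_ne_zero)
        · exact h''
      · exact absurd h' (by exact_mod_cast z.den_ne_zero)
    exact Rat.num_eq_zero.mp this
  · have : z.num = 0 := by
      have := hc0; rw [hc] at this
      rcases mul_eq_zero.mp this with h' | h'
      · rcases mul_eq_zero.mp h' with h'' | h''
        · exact absurd h'' (by exact_mod_cast x.den_ne_zero)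
        · exact absurd h'' (by exact_mod_cast y.den_ne_zero)
      · exact h'
    exact Rat.num_eq_zero.mp this

/-- For `p₃ = 2k·7^{ℓ+1}` with `k, ℓ ≥ 1`, the form `⟨-1, -2, 4p₃ - 21⟩` is not
equivalent to `⟨-2(4p₃ - 21)⟩ ⊕ H`; hence `u(P(7, -3, p₃)) ≥ 2`. -/
theorem three_stranded_pretzel_example (k ℓ : ℕ) (hk : 0 < k) (hℓ : 0 < ℓ)
    (p₃ : ℚ) (hp₃ : p₃ = 2 * (k : ℚ) * 7 ^ (ℓ + 1)) :
    ¬ QuadraticMap.Equivalent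
      (weightedSumSquares ℚ ![(-1 : ℚ), -2, 4 * p₃ - 21])
      (weightedSumSquares ℚ ![-2 * (4 * p₃ - 21), 1, -1]) := by
  intro h
  obtain ⟨e⟩ := h
  obtain ⟨ℓ', rfl⟩ : ∃ ℓ', ℓ = ℓ' + 1 := ⟨ℓ - 1, by omega⟩
  set M : ℤ := 8 * k * 7 ^ (ℓ' + 1) - 3 with hMdef
  have hM : ¬ (7:ℤ) ∣ M := by
    rw [hMdef]
    obtain ⟨t, ht⟩ : (7:ℤ) ∣ 8 * (k:ℤ) * 7 ^ (ℓ' + 1) := ⟨8 * k * 7 ^ ℓ', by ring⟩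
    intro hdvd
    omega
  have hcoef : 4 * p₃ - 21 = 7 * (M : ℚ) := by
    rw [hp₃, hMdef]
    push_cast
    ring
  set v : Fin 3 → ℚ := e.symm ![0, 1, 1] with hv
  have hQ : (weightedSumSquares ℚ ![(-1 : ℚ), -2, 4 * p₃ - 21]) v
      = (weightedSumSquares ℚ ![-2 * (4 * p₃ - 21), 1, -1]) ![0, 1, 1] :=
    e.symm.map_app _
  have hQ2 : (weightedSumSquares ℚ ![-2 * (4 * p₃ - 21), 1, -1]) ![(0:ℚ), 1, 1] = 0 := by
    rw [weightedSumSquares_apply]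
    simp [Fin.sum_univ_three]
  rw [hQ2, weightedSumSquares_apply] at hQ
  simp only [Fin.sum_univ_three, Matrix.cons_val_zero, Matrix.cons_val_one, Matrix.head_cons,
    Matrix.cons_val_two, Matrix.tail_cons, smul_eq_mul] at hQ
  have heq : (v 0)^2 + 2*(v 1)^2 = 7*(M:ℚ)*(v 2)^2 := by
    rw [← hcoef]; nlinarith [hQ]
  obtain ⟨h0, h1, h2⟩ := rat_aniso M hM _ _ _ heq
  have hvz : v = 0 := by
    funext i
    fin_cases i <;> simpa [v]
  have : (![0, 1, 1] : Fin 3 → ℚ) = 0 := by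
    have h00 : e.symm (0 : Fin 3 → ℚ) = 0 := map_zero _
    have := e.symm.injective (hvz.trans h00.symm)
    exact this
  have := congrFun this 1
  simp at this
end

section
/- Let M be the symmetric 4×4 matrix over ℚ with rows (4, −1, 0, 0), (−1, 2, 1, −1), (0, 1, 0, 1), (0, −1, 1, 0). Then the quadratic form x ↦ xᵀMx on ℚ⁴ is equivalent to the diagonal quadratic form ⟨4, 7/4, −4/7, 15/4⟩. -/
/-!
A change of variables `x = P y` turns the form of `M` into the form of `Pᵀ M P`. Running
Gram–Schmidt on the standard basis of `ℚ⁴` with respect to `M` gives a unitriangular `P`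
with `Pᵀ M P` diagonal, and its diagonal entries are the weights `4, 7/4, -4/7, 15/4`.
-/

open QuadraticMap

namespace Matrix

variable {n R : Type*} [Fintype n] [DecidableEq n] [CommRing R]

theorem toQuadraticForm'_transpose_mul_mul (M P : Matrix n n R) :
    (Pᵀ * M * P).toQuadraticForm' = M.toQuadraticForm'.comp (toLin' P) := by
  ext x
  simp [toQuadraticForm', LinearMap.BilinMap.toQuadraticMap_apply, toLinearMap₂'_apply',
    ← mulVec_mulVec, dotProduct_mulVec, vecMul_transpose]

theorem toQuadraticForm'_diagonal (w : n → R) :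
    (diagonal w).toQuadraticForm' = weightedSumSquares R w := by
  ext x
  simp [toQuadraticForm', LinearMap.BilinMap.toQuadraticMap_apply, toLinearMap₂'_apply',
    weightedSumSquares_apply, dotProduct, mulVec_diagonal, mul_left_comm]

theorem toQuadraticForm'_equivalent_weightedSumSquares {M P : Matrix n n R} {w : n → R}
    (hP : IsUnit P.det) (h : Pᵀ * M * P = diagonal w) :
    M.toQuadraticForm'.Equivalent (weightedSumSquares R w) := by
  have := P.invertibleOfIsUnitDet hP
  rw [← toQuadraticForm'_diagonal, ← h, toQuadraticForm'_transpose_mul_mul]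
  exact ⟨M.toQuadraticForm'.isometryEquivOfCompLinearEquiv (P.toLinearEquiv' this)⟩

end Matrix

/-- The quadratic form of the symmetrized Seifert matrix of the mirror of `7₄` is
equivalent to the diagonal form `⟨4, 7/4, -4/7, 15/4⟩`. -/
theorem seifert_form_seven_four :
    QuadraticMap.Equivalent
      (Matrix.toQuadraticMap'
        (!![(4 : ℚ), -1, 0, 0; -1, 2, 1, -1; 0, 1, 0, 1; 0, -1, 1, 0]))
      (weightedSumSquares ℚ ![(4 : ℚ), 7/4, -4/7, 15/4]) := by
  set P : Matrix (Fin 4) (Fin 4) ℚ :=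
    !![1, 1/4, -1/7, -1/4; 0, 1, -4/7, -1; 0, 0, 1, 11/4; 0, 0, 0, 1]
  have hP_upper : P.IsUpperTriangular := by
    intro i j hij
    fin_cases i <;> fin_cases j <;> simp_all [P]
  have hP_det : P.det = 1 := by
    rw [Matrix.det_of_isUpperTriangular hP_upper]
    simp [P, Fin.prod_univ_four]
  refine Matrix.toQuadraticForm'_equivalent_weightedSumSquares (P := P) (by simp [hP_det]) ?_
  ext i j
  fin_cases i <;> fin_cases j <;> simp [P, Matrix.mul_apply, Fin.sum_univ_four] <;> norm_num
end
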